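/- Let D be a Hermitian Dirac operator with zero diagonal on n vertices and let i, j be two vertices connected in G_D. Let Π(i,j) ⊆ {1,…,n} be the set of vertices lying on some simple path (no repeated vertex) from i to j in G_D, and let D' be the principal submatrix of D indexed by Π(i,j). Then d^D(i,j) = d^{D'}(i,j), where the right-hand side is the noncommutative distance computed in the submatrix D'. -/

import Mathlib

open scoped ENNReal

/-- The operator norm on square matrices induced by the Euclidean (ℓ²) norm. -/
noncomputable def opNorm {ι : Type*} [Finite ι] (M : Matrix ι ι ℂ) : ℝ :=
  letI := Fintype.ofFinite ι
  letI := Classical.decEq ι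
  ‖Matrix.toEuclideanCLM (𝕜 := ℂ) M‖

/-- The commutator `[D, π(a)]` of a matrix with the diagonal matrix of `a`. -/
noncomputable def commD {ι : Type*} [Finite ι] (D : Matrix ι ι ℂ) (a : ι → ℂ) : Matrix ι ι ℂ :=
  letI := Fintype.ofFinite ι
  letI := Classical.decEq ι
  D * Matrix.diagonal a - Matrix.diagonal a * D

/-- Connes' noncommutative distance associated to the Dirac operator `D`. -/
noncomputable def ncDist {ι : Type*} [Finite ι] (D : Matrix ι ι ℂ) (i j : ι) : ℝ≥0∞ :=
  ⨆ (a : ι → ℂ) (_ : opNorm (commD D a) ≤ 1), ENNReal.ofReal ‖a i - a j‖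

/-- The weight of an edge: the inverse of `|D i j|` (infinite if `D i j = 0`). -/
noncomputable def eWeight {ι : Type*} (D : Matrix ι ι ℂ) (u v : ι) : ℝ≥0∞ :=
  (ENNReal.ofReal ‖D u v‖)⁻¹

/-- Adjacency in the graph `G_D`. -/
def Adjac {ι : Type*} (D : Matrix ι ι ℂ) (u v : ι) : Prop := u ≠ v ∧ D u v ≠ 0

/-- The length of a walk `i :: p` computed with weights `eWeight D`. -/
noncomputable def walkLength {ι : Type*} (D : Matrix ι ι ℂ) : ι → List ι → ℝ≥0∞
  | _, [] => 0
  | u, v :: rest => eWeight D u v + walkLength D v rest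

/-- `i :: p` is a walk from `i` to `j` in the graph `G_D`. -/
def IsWalk {ι : Type*} (D : Matrix ι ι ℂ) (i j : ι) (p : List ι) : Prop :=
  List.Chain (Adjac D) i p ∧ (i :: p).getLast (List.cons_ne_nil _ _) = j

/-- `i` and `j` lie in the same connected component of `G_D`. -/
def Conn {ι : Type*} (D : Matrix ι ι ℂ) (i j : ι) : Prop := ∃ p, IsWalk D i j p

/-- The geodesic (weighted shortest-path) distance on `G_D`. -/
noncomputable def gDist {ι : Type*} (D : Matrix ι ι ℂ) (i j : ι) : ℝ≥0∞ :=
  ⨅ (p : List ι) (_ : IsWalk D i j p), walkLength D i p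


/-- A simple path: a walk with no repeated vertex. -/
def IsSimplePath {ι : Type*} (D : Matrix ι ι ℂ) (i j : ι) (p : List ι) : Prop :=
  IsWalk D i j p ∧ (i :: p).Nodup

/-- `Π(i,j)`: the set of vertices lying on some simple path from `i` to `j`. -/
def simplePathSet {ι : Type*} (D : Matrix ι ι ℂ) (i j : ι) : Set ι :=
  {v | ∃ p, IsSimplePath D i j p ∧ v ∈ i :: p}

/-!
Restricting `a` to `Π = Π(i,j)` restricts the commutator `[D, π(a)]` to a principal submatrix,
which cannot increase the operator norm; hence `d^D(i,j) ≤ d^{D'}(i,j)`. Conversely, extend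
`a : Π → ℂ` to all vertices so as to be constant on the connected components of `G_D` with the
edges inside `Π` removed. Then `[D, π(a)]` vanishes outside `Π × Π`, so its norm is that of
`[D', π(a)]`. The extension is well defined because such a component meets `Π` at most once:
a path between two vertices of `Π` whose interior avoids `Π` can be spliced into a simple path
from `i` to `j`, so its interior lies in `Π` after all.
-/

namespace SimpleGraph

variable {V : Type*} {G : SimpleGraph V}

def verticesOnPaths (G : SimpleGraph V) (i j : V) : Set V :=
  {v | ∃ p : G.Walk i j, p.IsPath ∧ v ∈ p.support}

namespace Walk

variable {u v w : V}

lemma IsPath.eq_of_mem_support_append {p : G.Walk u v} {q : G.Walk v w}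
    (h : (p.append q).IsPath) {x : V} (hp : x ∈ p.support) (hq : x ∈ q.support) : x = v := by
  by_contra hx
  exact h.ne_of_mem_support_of_append hx hp hq rfl

lemma IsPath.append {p : G.Walk u v} {q : G.Walk v w} (hp : p.IsPath) (hq : q.IsPath)
    (h : ∀ x ∈ p.support, x ∈ q.support → x = v) : (p.append q).IsPath := by
  have hq' := hq.support_nodup
  rw [← cons_tail_support] at hq'
  rw [isPath_def, support_append]
  refine hp.support_nodup.append hq'.of_cons fun x hxp hxq => ?_
  obtain rfl := h x hxp (List.mem_of_mem_tail hxq)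
  exact (List.nodup_cons.1 hq').1 hxq

lemma exists_eq_append_of_first_mem (T : Set V) (p : G.Walk u v) (hv : v ∈ T) :
    ∃ z ∈ T, ∃ (p₁ : G.Walk u z) (p₂ : G.Walk z v), p = p₁.append p₂ ∧
      ∀ x ∈ p₁.support, x ∈ T → x = z := by
  induction p with
  | nil => exact ⟨_, hv, nil, nil, rfl, by simp⟩
  | @cons u x v h q ih =>
    by_cases hu : u ∈ T
    · exact ⟨u, hu, nil, cons h q, rfl, by simp⟩
    · obtain ⟨z, hz, p₁, p₂, rfl, hfirst⟩ := ih hv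
      refine ⟨z, hz, cons h p₁, p₂, rfl, fun y hy hyT => ?_⟩
      rcases List.mem_cons.1 (support_cons h p₁ ▸ hy) with rfl | hy
      · exact absurd hyT hu
      · exact hfirst y hy hyT

lemma IsPath.exists_isPath_support_subset_of_append {i c j z : V} {A : G.Walk i c}
    {B : G.Walk c j} (hAB : (A.append B).IsPath) (hz : z ∈ B.support) (hzc : z ≠ c)
    {F : G.Walk c z} (hF : F.IsPath)
    (hFAB : ∀ x ∈ F.support, x ∈ (A.append B).support → x = c ∨ x = z) :
    ∃ W : G.Walk i j, W.IsPath ∧ F.support ⊆ W.support := by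
  obtain ⟨B₁, B₂, -, hB₂, rfl⟩ := hAB.of_append_right.mem_support_iff_exists_append.1 hz
  have hA := hAB.of_append_left
  have hAB' : ∀ x ∈ A.support, x ∈ (B₁.append B₂).support → x = c :=
    fun x => hAB.eq_of_mem_support_append
  have hzA : z ∉ A.support := fun h => hzc (hAB' z h hz)
  have hcB₂ : c ∉ B₂.support := fun h =>
    hzc (hAB.of_append_right.eq_of_mem_support_append B₁.start_mem_support h).symm
  refine ⟨(A.append F).append B₂,
    (hA.append hF fun x hxA hxF => ?_).append hB₂ fun x hx hxB₂ => ?_,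
    fun x hx => by simp [mem_support_append_iff, hx]⟩
  · rcases hFAB x hxF ((mem_support_append_iff _ _).2 (Or.inl hxA)) with h | rfl
    · exact h
    · exact absurd hxA hzA
  · have hxB : x ∈ (B₁.append B₂).support := (mem_support_append_iff _ _).2 (Or.inr hxB₂)
    rcases (mem_support_append_iff _ _).1 hx with hxA | hxF
    · obtain rfl := hAB' x hxA hxB
      exact absurd hxB₂ hcB₂
    · rcases hFAB x hxF ((mem_support_append_iff _ _).2 (Or.inr hxB)) with rfl | h
      · exact absurd hxB₂ hcB₂
      · exact h

lemma IsPath.exists_isPath_support_subset {i j c z : V} {Q : G.Walk i j} (hQ : Q.IsPath)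
    (hc : c ∈ Q.support) (hz : z ∈ Q.support) (hcz : c ≠ z) {F : G.Walk c z} (hF : F.IsPath)
    (hFQ : ∀ x ∈ F.support, x ∈ Q.support → x = c ∨ x = z) :
    ∃ W : G.Walk i j, W.IsPath ∧ F.support ⊆ W.support := by
  obtain ⟨A, B, rfl⟩ := Walk.mem_support_iff_exists_append.1 hc
  rcases (mem_support_append_iff _ _).1 hz with hzA | hzB
  · obtain ⟨A₁, A₂, rfl⟩ := Walk.mem_support_iff_exists_append.1 hzA
    rw [← append_assoc] at hQ hFQ
    obtain ⟨W, hW, hsub⟩ := hQ.exists_isPath_support_subset_of_append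
      ((mem_support_append_iff _ _).2 (Or.inl A₂.end_mem_support)) hcz hF.reverse
      fun x hx hxQ => (hFQ x (by simpa using hx) hxQ).symm
    exact ⟨W, hW, fun x hx => hsub (by simpa using hx)⟩
  · exact hQ.exists_isPath_support_subset_of_append hzB hcz.symm hF hFQ

lemma IsPath.exists_isPath_support_subset_of_bridge {i j c c' e : V} {Q : G.Walk i j}
    (hQ : Q.IsPath) (hc : c ∈ Q.support) (hcc' : c ≠ c') {S : G.Walk c' e} (hS : S.IsPath)
    (he : e ∈ Q.support) (hcS : c ∉ S.support) {E : G.Walk c c'} (hE : E.IsPath)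
    (hEQS : ∀ x ∈ E.support, x ∈ Q.support ∨ x ∈ S.support → x = c ∨ x = c') :
    ∃ W : G.Walk i j, W.IsPath ∧ E.support ⊆ W.support := by
  -- `z` is where `S` first returns to `Q`; `E` followed by `S` up to `z` meets `Q` only at its ends
  obtain ⟨z, hzQ, S₁, S₂, rfl, hfirst⟩ :=
    S.exists_eq_append_of_first_mem {x | x ∈ Q.support} he
  have hS₁ : ∀ x ∈ S₁.support, x ∈ (S₁.append S₂).support :=
    fun x hx => (mem_support_append_iff _ _).2 (Or.inl hx)
  have hcz : c ≠ z := by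
    rintro rfl
    exact hcS (hS₁ _ S₁.end_mem_support)
  have hES₁ : (E.append S₁).IsPath := hE.append hS.of_append_left fun x hxE hxS =>
    (hEQS x hxE (Or.inr (hS₁ x hxS))).resolve_left fun h => hcS (h ▸ hS₁ x hxS)
  obtain ⟨W, hW, hsub⟩ := hQ.exists_isPath_support_subset hc hzQ hcz hES₁ fun x hx hxQ => by
    rcases (mem_support_append_iff _ _).1 hx with hxE | hxS
    · rcases hEQS x hxE (Or.inl hxQ) with h | rfl
      · exact Or.inl h
      · exact Or.inr (hfirst x S₁.start_mem_support hxQ)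
    · exact Or.inr (hfirst x hxS hxQ)
  exact ⟨W, hW, fun x hx => hsub ((mem_support_append_iff _ _).2 (Or.inl hx))⟩

end Walk

open Walk

variable {i j : V}

lemma support_subset_verticesOnPaths {c c' : V} (hc : c ∈ G.verticesOnPaths i j)
    (hc' : c' ∈ G.verticesOnPaths i j) (hcc' : c ≠ c') {E : G.Walk c c'} (hE : E.IsPath)
    (hEout : ∀ x ∈ E.support, x ∈ G.verticesOnPaths i j → x = c ∨ x = c') :
    ∀ x ∈ E.support, x ∈ G.verticesOnPaths i j := by
  obtain ⟨Q, hQ, hcQ⟩ := hc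
  obtain ⟨Q', hQ', hc'Q'⟩ := hc'
  obtain ⟨e, he, S, hS, hcS, hSQ'⟩ : ∃ e ∈ Q.support, ∃ S : G.Walk c' e, S.IsPath ∧
      c ∉ S.support ∧ ∀ x ∈ S.support, x ∈ Q'.support := by
    obtain ⟨A, B, hA, hB, rfl⟩ := hQ'.mem_support_iff_exists_append.1 hc'Q'
    by_cases hcB : c ∈ B.support
    · refine ⟨i, Q.start_mem_support, A.reverse, hA.reverse, fun h => ?_, fun x hx => ?_⟩
      · exact hcc' (hQ'.eq_of_mem_support_append (by simpa using h) hcB)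
      · exact (mem_support_append_iff _ _).2 (Or.inl (by simpa using hx))
    · exact ⟨j, Q.end_mem_support, B, hB, hcB,
        fun x hx => (mem_support_append_iff _ _).2 (Or.inr hx)⟩
  obtain ⟨W, hW, hsub⟩ := hQ.exists_isPath_support_subset_of_bridge hcQ hcc' hS he hcS hE
    fun x hx hxQS => hEout x hx (hxQS.elim (fun h => ⟨Q, hQ, h⟩) fun h => ⟨Q', hQ', hSQ' x h⟩)
  exact fun x hx => ⟨W, hW, hsub hx⟩

lemma eq_of_reachable_deleteEdges_sym2_verticesOnPaths {c c' : V}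
    (hc : c ∈ G.verticesOnPaths i j) (hc' : c' ∈ G.verticesOnPaths i j)
    (h : (G.deleteEdges (G.verticesOnPaths i j).sym2).Reachable c c') : c = c' := by
  classical
  set s := G.verticesOnPaths i j
  obtain ⟨w⟩ := h
  induction hn : w.length using Nat.strong_induction_on generalizing c c' with
  | _ n ih =>
    by_contra hne
    by_cases hd : ∃ d ∈ w.support, d ∈ s ∧ d ≠ c ∧ d ≠ c'
    · obtain ⟨d, hdw, hds, hdc, hdc'⟩ := hd
      exact hdc (ih _ (hn ▸ w.length_takeUntil_lt_length hdw hdc') hc hds _ rfl).symm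
    push Not at hd
    obtain ⟨q, hq, hqs⟩ : ∃ q : (G.deleteEdges s.sym2).Walk c c', q.IsPath ∧
        ∀ x ∈ q.support, x ∈ s → x = c ∨ x = c' :=
      ⟨w.bypass, w.bypass_isPath, fun x hx hxs => by
        by_contra! h
        exact h.2 (hd x (w.support_bypass_subset_support hx) hxs h.1)⟩
    have hall := support_subset_verticesOnPaths hc hc' hne ((isPath_mapLe (deleteEdges_le _)).2 hq)
      (by simpa only [support_mapLe_eq_support] using hqs)
    simp only [support_mapLe_eq_support] at hall
    -- the first edge of `q` joins two vertices of `s`, so it was deleted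
    cases q with
    | nil => exact hne rfl
    | cons hadj q => exact (deleteEdges_adj.1 hadj).2 ⟨hc, hall _ (by simp)⟩

lemma exists_extend_forall_adj_eq {H : SimpleGraph V} {s : Set V}
    (hs : ∀ c ∈ s, ∀ c' ∈ s, H.Reachable c c' → c = c') {β : Type*} [Nonempty β] (a : s → β) :
    ∃ b : V → β, (∀ k : s, b k = a k) ∧ ∀ u v, H.Adj u v → b u = b v := by
  classical
  let f : H.ConnectedComponent → β := fun C =>
    if h : ∃ k : s, H.connectedComponentMk k = C then a h.choose else Classical.arbitrary β
  refine ⟨fun u => f (H.connectedComponentMk u), fun k => ?_,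
    fun u v huv => congrArg f (ConnectedComponent.eq.2 huv.reachable)⟩
  have h : ∃ k' : s, H.connectedComponentMk k' = H.connectedComponentMk k := ⟨k, rfl⟩
  simp only [f, dif_pos h]
  exact congrArg a (Subtype.ext (hs _ h.choose.2 _ k.2 (ConnectedComponent.eq.1 h.choose_spec)))

end SimpleGraph

open scoped Matrix.Norms.L2Operator

namespace Matrix

variable {𝕜 ι κ m n : Type*} [RCLike 𝕜]

lemma l2_opNorm_le_one_of_conjTranspose_mul_self_eq_one [Fintype m] [Fintype n] [DecidableEq n]
    {P : Matrix m n 𝕜} (hP : Pᴴ * P = 1) : ‖P‖ ≤ 1 := by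
  have h : ‖P‖ * ‖P‖ ≤ 1 := by
    rw [← l2_opNorm_conjTranspose_mul_self, hP, cstar_norm_def, map_one]
    exact ContinuousLinearMap.norm_id_le
  nlinarith [norm_nonneg P]

lemma l2_opNorm_mul_mul_le [Fintype m] [Fintype n] [Fintype ι] [DecidableEq n] [DecidableEq ι]
    {A : Matrix m ι 𝕜} {B : Matrix ι n 𝕜} (hA : ‖A‖ ≤ 1) (hB : ‖B‖ ≤ 1) (M : Matrix ι ι 𝕜) :
    ‖A * M * B‖ ≤ ‖M‖ :=
  calc ‖A * M * B‖ ≤ ‖A‖ * ‖M‖ * ‖B‖ :=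
        (l2_opNorm_mul _ _).trans (mul_le_mul_of_nonneg_right (l2_opNorm_mul _ _) (norm_nonneg _))
    _ ≤ 1 * ‖M‖ * 1 := by gcongr
    _ = ‖M‖ := by ring

variable [DecidableEq ι]

lemma conjTranspose_one_submatrix_mul_self [Fintype ι] [DecidableEq κ] {e : κ → ι}
    (he : e.Injective) :
    ((1 : Matrix ι ι 𝕜).submatrix id e)ᴴ * (1 : Matrix ι ι 𝕜).submatrix id e = 1 := by
  ext k l
  simp [mul_apply, one_apply, he.eq_iff]

lemma conjTranspose_one_submatrix_mul_mul_one_submatrix [Fintype ι] (M : Matrix ι ι 𝕜)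
    (e : κ → ι) :
    ((1 : Matrix ι ι 𝕜).submatrix id e)ᴴ * M * (1 : Matrix ι ι 𝕜).submatrix id e =
      M.submatrix e e := by
  ext k l
  simp [mul_apply, one_apply]

lemma one_submatrix_mul_submatrix_mul_conjTranspose [Fintype κ] {M : Matrix ι ι 𝕜} {e : κ → ι}
    (he : e.Injective) (hM : ∀ u v, M u v ≠ 0 → u ∈ Set.range e ∧ v ∈ Set.range e) :
    (1 : Matrix ι ι 𝕜).submatrix id e * M.submatrix e e * ((1 : Matrix ι ι 𝕜).submatrix id e)ᴴ =
      M := by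
  classical
  ext u v
  by_cases h : u ∈ Set.range e ∧ v ∈ Set.range e
  · obtain ⟨⟨k, rfl⟩, ⟨l, rfl⟩⟩ := h
    simp [mul_apply, one_apply, he.eq_iff]
  · rw [not_imp_comm.1 (hM u v) h]
    simp only [conjTranspose_submatrix, conjTranspose_one, mul_apply, submatrix_apply, one_apply,
      id_eq, ite_mul, one_mul, zero_mul, mul_ite, mul_one, mul_zero]
    refine Finset.sum_eq_zero fun l _ => ite_eq_right_iff.2 fun hl => ?_
    exact Finset.sum_eq_zero fun k _ => if_neg fun hk => h ⟨⟨k, hk.symm⟩, ⟨l, hl⟩⟩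

variable [Fintype ι] [Fintype κ] [DecidableEq κ]

lemma l2_opNorm_submatrix_le (M : Matrix ι ι 𝕜) {e : κ → ι} (he : e.Injective) :
    ‖M.submatrix e e‖ ≤ ‖M‖ := by
  have hP := l2_opNorm_le_one_of_conjTranspose_mul_self_eq_one
    (conjTranspose_one_submatrix_mul_self (𝕜 := 𝕜) he)
  rw [← conjTranspose_one_submatrix_mul_mul_one_submatrix M e]
  exact l2_opNorm_mul_mul_le (by rwa [l2_opNorm_conjTranspose]) hP M

lemma l2_opNorm_submatrix_eq {M : Matrix ι ι 𝕜} {e : κ → ι} (he : e.Injective)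
    (hM : ∀ u v, M u v ≠ 0 → u ∈ Set.range e ∧ v ∈ Set.range e) :
    ‖M.submatrix e e‖ = ‖M‖ := by
  have hP := l2_opNorm_le_one_of_conjTranspose_mul_self_eq_one
    (conjTranspose_one_submatrix_mul_self (𝕜 := 𝕜) he)
  refine (l2_opNorm_submatrix_le M he).antisymm ?_
  conv_lhs => rw [← one_submatrix_mul_submatrix_mul_conjTranspose he hM]
  exact l2_opNorm_mul_mul_le hP (by rwa [l2_opNorm_conjTranspose]) _

end Matrix

section DiracOperator

variable {ι : Type*}

def diracGraph {D : Matrix ι ι ℂ} (hD : D.IsHermitian) : SimpleGraph ι where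
  Adj := Adjac D
  symm := ⟨fun _ _ h => ⟨h.1.symm, fun h0 => h.2 (by rw [← hD.apply, h0, star_zero])⟩⟩
  loopless := ⟨fun _ h => h.1 rfl⟩

lemma simplePathSet_eq_verticesOnPaths {D : Matrix ι ι ℂ} (hD : D.IsHermitian) (i j : ι) :
    simplePathSet D i j = (diracGraph hD).verticesOnPaths i j := by
  ext v
  constructor
  · rintro ⟨p, ⟨⟨hchain, hlast⟩, hnodup⟩, hv⟩
    replace hchain : (i :: p).IsChain (diracGraph hD).Adj := hchain
    let w := (SimpleGraph.Walk.ofSupport (i :: p) (List.cons_ne_nil _ _) hchain).copy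
      List.head_cons hlast
    have hw : w.support = i :: p := by
      rw [SimpleGraph.Walk.support_copy, SimpleGraph.Walk.support_ofSupport]
    exact ⟨w, (SimpleGraph.Walk.isPath_def w).2 (hw ▸ hnodup), hw ▸ hv⟩
  · rintro ⟨q, hq, hv⟩
    refine ⟨q.support.tail, ⟨⟨?_, ?_⟩, ?_⟩, ?_⟩
    · show List.IsChain _ (i :: _)
      rw [q.cons_tail_support]
      exact q.isChain_adj_support
    · simp [q.cons_tail_support]
    · rw [q.cons_tail_support]
      exact hq.support_nodup
    · rwa [q.cons_tail_support]

lemma opNorm_eq_l2_opNorm [Fintype ι] [DecidableEq ι] (M : Matrix ι ι ℂ) : opNorm M = ‖M‖ := by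
  rw [Matrix.cstar_norm_def]
  unfold opNorm
  congr!

variable [Finite ι]

lemma commD_apply (D : Matrix ι ι ℂ) (a : ι → ℂ) (u v : ι) :
    commD D a u v = D u v * (a v - a u) := by
  simp only [commD, Matrix.sub_apply, Matrix.mul_diagonal, Matrix.diagonal_mul]
  ring

lemma commD_submatrix {κ : Type*} [Finite κ] (D : Matrix ι ι ℂ) (a : ι → ℂ) (e : κ → ι) :
    commD (D.submatrix e e) (a ∘ e) = (commD D a).submatrix e e := by
  ext k l
  simp only [commD_apply, Matrix.submatrix_apply, Function.comp_apply]

lemma ncDist_le_ncDist_submatrix (D : Matrix ι ι ℂ) (s : Set ι) {i j : ι} (hi : i ∈ s)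
    (hj : j ∈ s) :
    ncDist D i j ≤ ncDist (D.submatrix ((↑) : s → ι) (↑)) ⟨i, hi⟩ ⟨j, hj⟩ := by
  classical
  have := Fintype.ofFinite ι
  refine iSup₂_le fun a ha => le_iSup₂_of_le (a ∘ (↑)) ?_ le_rfl
  rw [opNorm_eq_l2_opNorm] at ha ⊢
  rw [commD_submatrix]
  exact (Matrix.l2_opNorm_submatrix_le _ Subtype.val_injective).trans ha

lemma ncDist_submatrix_le_of_forall_exists_extend (D : Matrix ι ι ℂ) (s : Set ι) {i j : ι}
    (hi : i ∈ s) (hj : j ∈ s)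
    (hext : ∀ a : s → ℂ, ∃ b : ι → ℂ, (∀ k : s, b k = a k) ∧
      ∀ u v, Adjac D u v → ¬(u ∈ s ∧ v ∈ s) → b u = b v) :
    ncDist (D.submatrix ((↑) : s → ι) (↑)) ⟨i, hi⟩ ⟨j, hj⟩ ≤ ncDist D i j := by
  classical
  have := Fintype.ofFinite ι
  refine iSup₂_le fun a ha => ?_
  obtain ⟨b, hba, hb⟩ := hext a
  refine le_iSup₂_of_le b ?_ (by rw [hba ⟨i, hi⟩, hba ⟨j, hj⟩])
  have hsupp : ∀ u v, commD D b u v ≠ 0 →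
      u ∈ Set.range ((↑) : s → ι) ∧ v ∈ Set.range ((↑) : s → ι) := by
    intro u v huv
    rw [commD_apply] at huv
    have hbuv : b v - b u ≠ 0 := right_ne_zero_of_mul huv
    have hne : u ≠ v := by
      rintro rfl
      exact hbuv (sub_self _)
    rw [Subtype.range_coe]
    by_contra hout
    exact hbuv (sub_eq_zero.2 (hb u v ⟨hne, left_ne_zero_of_mul huv⟩ hout).symm)
  rw [opNorm_eq_l2_opNorm] at ha ⊢
  rwa [← Matrix.l2_opNorm_submatrix_eq Subtype.val_injective hsupp, ← commD_submatrix,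
    show b ∘ (↑) = a from funext hba]

end DiracOperator

theorem stmt5_general {n : ℕ} (D : Matrix (Fin n) (Fin n) ℂ)
    (hherm : D.IsHermitian) (i j : Fin n)
    (hi : i ∈ simplePathSet D i j) (hj : j ∈ simplePathSet D i j) :
    ncDist D i j =
      ncDist (D.submatrix (Subtype.val : simplePathSet D i j → Fin n) Subtype.val)
        ⟨i, hi⟩ ⟨j, hj⟩ := by
  refine (ncDist_le_ncDist_submatrix D _ hi hj).antisymm
    (ncDist_submatrix_le_of_forall_exists_extend D _ hi hj fun a => ?_)
  have hs : ∀ c ∈ simplePathSet D i j, ∀ c' ∈ simplePathSet D i j,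
      ((diracGraph hherm).deleteEdges (simplePathSet D i j).sym2).Reachable c c' → c = c' := by
    rw [simplePathSet_eq_verticesOnPaths hherm]
    exact fun c hc c' hc' => SimpleGraph.eq_of_reachable_deleteEdges_sym2_verticesOnPaths hc hc'
  obtain ⟨b, hba, hb⟩ := SimpleGraph.exists_extend_forall_adj_eq hs a
  exact ⟨b, hba, fun u v huv hout => hb u v (SimpleGraph.deleteEdges_adj.2 ⟨huv, hout⟩)⟩

theorem stmt5 {n : ℕ} (D : Matrix (Fin n) (Fin n) ℂ)
    (hherm : D.IsHermitian) (hdiag : ∀ i, D i i = 0) (i j : Fin n)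
    (hconn : Conn D i j) (hi : i ∈ simplePathSet D i j) (hj : j ∈ simplePathSet D i j) :
    ncDist D i j =
      ncDist (D.submatrix (Subtype.val : simplePathSet D i j → Fin n) Subtype.val)
        ⟨i, hi⟩ ⟨j, hj⟩ :=
  stmt5_general D hherm i j hi hj
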